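/- Let K be an algebraically closed field of characteristic zero, L a finite-dimensional semisimple Lie algebra over K with nondegenerate Killing form κ, and H a splitting Cartan subalgebra of L. Let α be a root with coroot h_α, let e ∈ L_α and f ∈ L_{−α} be such that (h_α, e, f) is an sl₂-triple, and let θ = exp(ad e) ∘ exp(ad(−f)) ∘ exp(ad e). For λ ∈ H*, let h_λ ∈ H denote the unique element with κ(h_λ, x) = λ(x) for all x ∈ H. Then θ(h_λ) = h_{s_α λ}, where s_α λ = λ − λ(h_α)·ᾱ and ᾱ ∈ H* is the root α regarded as a functional on H. -/

import Mathlib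

/-- For a linear functional `α` on a Lie subalgebra `H` of `L`, the root space `L_α` is
`{x ∈ L : ⁅h, x⁆ = α h • x for all h ∈ H}`. -/
def rootSpace' {K L : Type*} [Field K] [LieRing L] [LieAlgebra K L]
    (H : LieSubalgebra K L) (α : Module.Dual K H) : Submodule K L :=
  ⨅ h : H, Module.End.eigenspace (LieAlgebra.ad K L (h : L)) (α h)

/-- `α` is a root of `(L, H)` if it is a nonzero functional with nonzero root space. -/
def IsRoot' {K L : Type*} [Field K] [LieRing L] [LieAlgebra K L]
    (H : LieSubalgebra K L) (α : Module.Dual K H) : Prop :=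
  α ≠ 0 ∧ rootSpace' H α ≠ ⊥

/-- The exponential `exp D = Σₙ Dⁿ/n!` of an endomorphism `D`.  For a nilpotent `D` this
is the usual exponential, since the sum ranges over all `n` with `D ^ n ≠ 0`
(`D ^ n = 0` whenever `n ≥ nilpotencyClass D`). -/
noncomputable def expEnd {K M : Type*} [Field K] [AddCommGroup M] [Module K M]
    (D : Module.End K M) : Module.End K M :=
  ∑ n ∈ Finset.range (nilpotencyClass D + 1), (n.factorial : K)⁻¹ • D ^ n

/-! On `x ∈ H` we have `[x, e] = α(x) e` and `[x, f] = -α(x) f`, so each of the three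
exponentials truncates after its linear or quadratic term and `θ x = x - α(x) h_α`.
Since `[e, f] = κ(e, f) t_α` with `t_α` the Killing dual of `α`, the coroot `h_α` is a multiple
of `t_α`, and symmetry of `κ` gives `λ(h_α) = κ(e, f) α(h_λ)`: this is exactly the scalar in
front of `t_α` in `h_{s_α λ} = h_λ - λ(h_α) t_α`. -/

section Exponential

variable {K M : Type*} [Field K] [AddCommGroup M] [Module K M] {D : Module.End K M}

lemma expEnd_apply_eq_sum (hD : IsNilpotent D) {x : M} {m : ℕ} (hm : (D ^ m) x = 0) :
    expEnd D x = ∑ n ∈ Finset.range m, (n.factorial : K)⁻¹ • (D ^ n) x := by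
  set u : ℕ → M := fun n ↦ (n.factorial : K)⁻¹ • (D ^ n) x
  have hu_m : ∀ n ≥ m, u n = 0 := fun n hn ↦ by
    simp [u, Module.End.pow_map_zero_of_le hn hm]
  have hu_class : ∀ n ≥ nilpotencyClass D + 1, u n = 0 := fun n hn ↦ by
    simp [u, pow_eq_zero_of_le (show nilpotencyClass D ≤ n by omega) (pow_nilpotencyClass hD)]
  calc expEnd D x = ∑ n ∈ Finset.range (nilpotencyClass D + 1), u n := by
        simp [expEnd, u, LinearMap.sum_apply]
    _ = ∑ n ∈ Finset.range (max (nilpotencyClass D + 1) m), u n :=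
        (Finset.eventually_constant_sum hu_class (le_max_left _ _)).symm
    _ = ∑ n ∈ Finset.range m, u n :=
        Finset.eventually_constant_sum hu_m (le_max_right _ _)

lemma expEnd_apply_of_sq_eq_zero (hD : IsNilpotent D) {x : M} (hx : (D ^ 2) x = 0) :
    expEnd D x = x + D x := by
  simp [expEnd_apply_eq_sum hD hx, Finset.sum_range_succ]

lemma expEnd_apply_of_pow_three_eq_zero (hD : IsNilpotent D) {x : M} (hx : (D ^ 3) x = 0) :
    expEnd D x = x + D x + (2 : K)⁻¹ • (D ^ 2) x := by
  simp [expEnd_apply_eq_sum hD hx, Finset.sum_range_succ, Nat.factorial]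

end Exponential

section WeylElement

open LieAlgebra

variable {K L : Type*} [Field K] [CharZero K] [LieRing L] [LieAlgebra K L]

lemma expEnd_ad_mul_expEnd_ad_neg_mul_expEnd_ad_apply {e f h x : L} {a : K}
    (he : IsNilpotent (ad K L e)) (hf : IsNilpotent (ad K L f))
    (hef : ⁅e, f⁆ = h) (hhe : ⁅h, e⁆ = (2 : K) • e) (hhf : ⁅h, f⁆ = (-2 : K) • f)
    (hxe : ⁅x, e⁆ = a • e) (hxf : ⁅x, f⁆ = -a • f) :
    (expEnd (ad K L e) * expEnd (ad K L (-f)) * expEnd (ad K L e)) x = x - a • h := by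
  have hf' : IsNilpotent (ad K L (-f)) := by rw [map_neg]; exact hf.neg
  have hex : ⁅e, x⁆ = -(a • e) := by rw [← lie_skew, hxe]
  have hfx : ⁅f, x⁆ = a • f := by rw [← lie_skew, hxf, neg_smul, neg_neg]
  have hfe : ⁅f, e⁆ = -h := by rw [← lie_skew, hef]
  have hfh : ⁅f, h⁆ = (2 : K) • f := by rw [← lie_skew, hhf]; module
  have heh : ⁅e, h⁆ = -((2 : K) • e) := by rw [← lie_skew, hhe]
  have hexp_right : expEnd (ad K L e) x = x - a • e := by
    rw [expEnd_apply_of_sq_eq_zero he (by simp [pow_two, hex])]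
    simp [hex, sub_eq_add_neg]
  have hF₁ : ad K L (-f) (x - a • e) = -(a • f) - a • h := by
    rw [map_neg, LinearMap.neg_apply, ad_apply, lie_sub, lie_smul, hfx, hfe]
    module
  have hF₂ : ad K L (-f) (-(a • f) - a • h) = (2 * a) • f := by
    rw [map_neg, LinearMap.neg_apply, ad_apply, lie_sub, lie_neg, lie_smul, lie_smul, lie_self,
      hfh]
    module
  have hexp_middle : expEnd (ad K L (-f)) (x - a • e) = x - a • e - a • h := by
    rw [expEnd_apply_of_pow_three_eq_zero hf' (by
      rw [pow_succ, Module.End.mul_apply, hF₁, pow_two, Module.End.mul_apply, hF₂]; simp),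
      pow_two, Module.End.mul_apply, hF₁, hF₂]
    module
  have hE₁ : ad K L e (x - a • e - a • h) = a • e := by
    rw [ad_apply, lie_sub, lie_sub, lie_smul, lie_smul, hex, lie_self, heh]
    module
  have hexp_left : expEnd (ad K L e) (x - a • e - a • h) = x - a • h := by
    rw [expEnd_apply_of_sq_eq_zero he (by simp [pow_two, -lie_sub, hE₁]), hE₁]
    abel
  rw [Module.End.mul_apply, Module.End.mul_apply, hexp_right, hexp_middle, hexp_left]

end WeylElement

section CartanSubalgebra

open LieAlgebra

variable {K L : Type*} [Field K] [LieRing L] [LieAlgebra K L] {H : LieSubalgebra K L}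

lemma mem_rootSpace'_iff {α : Module.Dual K H} {x : L} :
    x ∈ rootSpace' H α ↔ ∀ h : H, ⁅(h : L), x⁆ = α h • x := by
  simp [rootSpace', Submodule.mem_iInf]

lemma rootSpace'_le_rootSpace [LieRing.IsNilpotent H] (α : Module.Dual K H) :
    rootSpace' H α ≤ (rootSpace H α).toSubmodule := fun x hx ↦ by
  rw [LieSubmodule.mem_toSubmodule, LieModule.mem_genWeightSpace]
  exact fun h ↦ ⟨1, by simp [mem_rootSpace'_iff.mp hx h]⟩

variable [FiniteDimensional K L] [H.IsCartanSubalgebra]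

lemma isNilpotent_ad_of_mem_rootSpace' [CharZero K] [IsAlgClosed K] {α : Module.Dual K H}
    (hα : α ≠ 0) {x : L} (hx : x ∈ rootSpace' H α) : IsNilpotent (ad K L x) :=
  isNilpotent_ad_of_mem_rootSpace H (fun h ↦ hα (LinearMap.coe_injective h))
    (rootSpace'_le_rootSpace α hx)

variable [IsKilling K L]

lemma eq_cartanEquivDual_symm_iff {h : H} {lam : Module.Dual K H} :
    h = (IsKilling.cartanEquivDual H).symm lam ↔ ∀ x : H, killingForm K L h x = lam x := by
  rw [LinearEquiv.eq_symm_apply, LinearMap.ext_iff]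
  rfl

lemma apply_cartanEquivDual_symm_comm (lam μ : Module.Dual K H) :
    lam ((IsKilling.cartanEquivDual H).symm μ) = μ ((IsKilling.cartanEquivDual H).symm lam) := by
  conv_lhs => rw [← (IsKilling.cartanEquivDual H).apply_symm_apply lam]
  conv_rhs => rw [← (IsKilling.cartanEquivDual H).apply_symm_apply μ]
  rw [IsKilling.cartanEquivDual_apply_apply, IsKilling.cartanEquivDual_apply_apply]
  exact LieModule.traceForm_comm K H L _ _

variable [CharZero K] [IsAlgClosed K]

lemma lie_eq_killingForm_smul_of_mem_rootSpace' {α : Module.Dual K H} (hα : IsRoot' H α)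
    {e f : L} (he : e ∈ rootSpace' H α) (hf : f ∈ rootSpace' H (-α)) :
    ⁅e, f⁆ = killingForm K L e f • ((IsKilling.cartanEquivDual H).symm α : L) := by
  let β : LieModule.Weight K H L := ⟨α, fun h ↦ hα.2 (eq_bot_iff.2 fun x hx ↦ by
    simpa [h] using rootSpace'_le_rootSpace α hx)⟩
  exact IsKilling.lie_eq_killingForm_smul_of_mem_rootSpace_of_mem_rootSpace_neg (α := β)
    (rootSpace'_le_rootSpace α he) (rootSpace'_le_rootSpace (-α) hf)

end CartanSubalgebra

theorem weyl_element_maps_killing_dual_to_reflected_dual_general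
    {K L : Type*} [Field K] [IsAlgClosed K] [CharZero K]
    [LieRing L] [LieAlgebra K L] [FiniteDimensional K L]
    [LieAlgebra.IsKilling K L]
    (H : LieSubalgebra K L) [H.IsCartanSubalgebra]
    (α : Module.Dual K H) (hroot : IsRoot' H α)
    (hα : H)
    (e f : L) (hmeme : e ∈ rootSpace' H α) (hmemf : f ∈ rootSpace' H (-α))
    (hef : ⁅e, f⁆ = (hα : L))
    (hhe : ⁅(hα : L), e⁆ = (2 : K) • e) (hhf : ⁅(hα : L), f⁆ = (-2 : K) • f)
    (θ : Module.End K L)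
    (hθ : θ = expEnd (LieAlgebra.ad K L e) * expEnd (LieAlgebra.ad K L (-f)) *
      expEnd (LieAlgebra.ad K L e))
    (lam : Module.Dual K H)
    (hlam : H) (hdual : ∀ x : H, killingForm K L (hlam : L) (x : L) = lam x)
    (hlam' : H)
    (hdual' : ∀ x : H, killingForm K L (hlam' : L) (x : L) = (lam - lam hα • α) x) :
    θ (hlam : L) = (hlam' : L) := by
  have hθ_hlam : θ hlam = hlam - α hlam • (hα : L) := by
    rw [hθ]
    exact expEnd_ad_mul_expEnd_ad_neg_mul_expEnd_ad_apply
      (isNilpotent_ad_of_mem_rootSpace' hroot.1 hmeme)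
      (isNilpotent_ad_of_mem_rootSpace' (neg_ne_zero.2 hroot.1) hmemf) hef hhe hhf
      (mem_rootSpace'_iff.mp hmeme hlam) (by simpa using mem_rootSpace'_iff.mp hmemf hlam)
  have hα_eq : hα = killingForm K L e f • (LieAlgebra.IsKilling.cartanEquivDual H).symm α :=
    Subtype.ext (hef ▸ lie_eq_killingForm_smul_of_mem_rootSpace' hroot hmeme hmemf)
  have hlam_eq : hlam = (LieAlgebra.IsKilling.cartanEquivDual H).symm lam :=
    eq_cartanEquivDual_symm_iff.2 hdual
  have hlam'_eq : hlam' = (LieAlgebra.IsKilling.cartanEquivDual H).symm (lam - lam hα • α) :=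
    eq_cartanEquivDual_symm_iff.2 hdual'
  have hlam_hα : lam hα = killingForm K L e f * α hlam := by
    rw [hα_eq, map_smul, apply_cartanEquivDual_symm_comm, ← hlam_eq, smul_eq_mul]
  rw [hθ_hlam, hlam'_eq, map_sub, map_smul, ← hlam_eq, hlam_hα, hα_eq]
  push_cast
  module

/-- Let `L` be a finite-dimensional semisimple Lie algebra over an algebraically closed
field of characteristic zero with nondegenerate Killing form `κ`, `H` a (splitting)
Cartan subalgebra, `α` a root with coroot `h_α`, `e ∈ L_α`, `f ∈ L_{−α}` such that
`(h_α, e, f)` is an `sl₂`-triple, and `θ = exp(ad e) ∘ exp(ad (−f)) ∘ exp(ad e)`.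
For `λ ∈ H*` let `h_λ ∈ H` be the unique element with `κ(h_λ, x) = λ(x)` for all
`x ∈ H`.  Then `θ(h_λ) = h_{s_α λ}`, where `s_α λ = λ − λ(h_α) • α` and `α` is regarded
as a functional on `H`. -/
theorem weyl_element_maps_killing_dual_to_reflected_dual
    {K L : Type*} [Field K] [IsAlgClosed K] [CharZero K]
    [LieRing L] [LieAlgebra K L] [FiniteDimensional K L]
    [LieAlgebra.IsSemisimple K L] [LieAlgebra.IsKilling K L]
    (H : LieSubalgebra K L) [H.IsCartanSubalgebra]
    (α : Module.Dual K H) (hroot : IsRoot' H α)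
    (hα : H) (hcoroot : α hα = 2)
    (e f : L) (hmeme : e ∈ rootSpace' H α) (hmemf : f ∈ rootSpace' H (-α))
    (hef : ⁅e, f⁆ = (hα : L)) (he : e ≠ 0) (hf : f ≠ 0)
    (hhe : ⁅(hα : L), e⁆ = (2 : K) • e) (hhf : ⁅(hα : L), f⁆ = (-2 : K) • f)
    (θ : Module.End K L)
    (hθ : θ = expEnd (LieAlgebra.ad K L e) * expEnd (LieAlgebra.ad K L (-f)) *
      expEnd (LieAlgebra.ad K L e))
    (lam : Module.Dual K H)
    (hlam : H) (hdual : ∀ x : H, killingForm K L (hlam : L) (x : L) = lam x)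
    (hlam' : H)
    (hdual' : ∀ x : H, killingForm K L (hlam' : L) (x : L) = (lam - lam hα • α) x) :
    θ (hlam : L) = (hlam' : L) :=
  weyl_element_maps_killing_dual_to_reflected_dual_general H α hroot hα e f hmeme hmemf hef hhe hhf
    θ hθ lam hlam hdual hlam' hdual'
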